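/- arXiv:math/0411215 — 7 statements merged into one kernel-verified Lean document; each statement's English description precedes it below -/
import Mathlib

section
/- For every nonzero rational number t, the point (-1, t) lies on the curve E_t, its double equals the point (0, 0), and it has order exactly 4 in the group E_t(ℚ). -/
open WeierstrassCurve

/-- The elliptic curve `E_t : v² = u³ + (t² + 2)u² + u`. -/
noncomputable def Et (t : ℚ) : WeierstrassCurve.Affine ℚ :=
  { a₁ := 0, a₂ := t ^ 2 + 2, a₃ := 0, a₄ := 1, a₆ := 0 }

theorem addOrderOf_eq_four_of_two_nsmul {G : Type*} [AddGroup G] {P Q : G}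
    (hPQ : 2 • P = Q) (hQ : Q ≠ 0) (hQ2 : 2 • Q = 0) : addOrderOf P = 4 := by
  have : Fact (Nat.Prime 2) := ⟨Nat.prime_two⟩
  have hP2 : ¬ 2 ^ 1 • P = 0 := by rwa [pow_one, hPQ]
  have hP4 : 2 ^ 2 • P = 0 := by rw [pow_succ, mul_comm, mul_nsmul, pow_one, hPQ, hQ2]
  simpa using addOrderOf_eq_prime_pow hP2 hP4

namespace Et

variable (t : ℚ)

theorem nonsingular_zero_zero : (Et t).Nonsingular 0 0 := by
  rw [Affine.nonsingular_iff, Affine.equation_iff]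
  exact ⟨by simp [Et], Or.inl (by simp [Et])⟩

theorem two_nsmul_point_zero_zero : 2 • Affine.Point.some _ _ (nonsingular_zero_zero t) = 0 := by
  rw [two_nsmul]
  exact Affine.Point.add_self_of_Y_eq (by simp [Et, Affine.negY])

variable {t}

theorem Y_ne_negY_neg_one (ht : t ≠ 0) : t ≠ (Et t).negY (-1) t := by
  simp only [Et, Affine.negY]
  intro h
  exact ht (by linarith)

theorem nonsingular_neg_one (ht : t ≠ 0) : (Et t).Nonsingular (-1) t := by
  rw [Affine.nonsingular_iff, Affine.equation_iff]
  exact ⟨by simp [Et]; ring, Or.inr (Y_ne_negY_neg_one ht)⟩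

-- The tangent at `(-1, t)` is the line `v = -t u`, which meets `E_t` again at `(0, 0)`.
theorem slope_neg_one (ht : t ≠ 0) : (Et t).slope (-1) (-1) t t = -t := by
  rw [Affine.slope_of_Y_ne rfl (Y_ne_negY_neg_one ht)]
  simp only [Et, Affine.negY]
  rw [div_eq_iff (by intro h; exact ht (by linarith))]
  ring

theorem two_nsmul_point_neg_one (ht : t ≠ 0) :
    2 • Affine.Point.some _ _ (nonsingular_neg_one ht) =
      Affine.Point.some _ _ (nonsingular_zero_zero t) := by
  rw [two_nsmul, Affine.Point.add_self_of_Y_ne (Y_ne_negY_neg_one ht)]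
  simp only [slope_neg_one ht, Affine.Point.some.injEq]
  constructor <;> simp [Et, Affine.addX, Affine.addY, Affine.negAddY, Affine.negY] <;> ring

end Et

theorem stmt_0 (t : ℚ) (ht : t ≠ 0) :
    ∃ h : (Et t).Nonsingular (-1) t, ∃ h0 : (Et t).Nonsingular 0 0,
      (2 : ℤ) • (Affine.Point.some _ _ h) = Affine.Point.some _ _ h0 ∧
        addOrderOf (Affine.Point.some _ _ h) = 4 := by
  refine ⟨Et.nonsingular_neg_one ht, Et.nonsingular_zero_zero t, ?_, ?_⟩
  · rw [two_zsmul, ← two_nsmul, Et.two_nsmul_point_neg_one ht]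
  · exact addOrderOf_eq_four_of_two_nsmul (Et.two_nsmul_point_neg_one ht)
      (Affine.Point.some_ne_zero _) (Et.two_nsmul_point_zero_zero t)
end

section
/- Let t be a nonzero rational number, a = -1/(4t²), A = (t² + 4)/64. If (x, y) ∈ ℚ² satisfies y² + xy + ay = x³ + ax² with x ≠ 0 and x + a ≠ 0, then the pair (X, Y) defined by X = -A + ( t(x + 2a)(2y + x + a) / (8x(x + a)) )² and Y = X² - (x + a)² · ( (2y + x + a - 2tx(x + 2a)) / (8x(x + a)) )⁴ satisfies Y² + XY + AY = X³ + AX². (This is the explicit 4-isogeny φ: E → E'.) -/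
set_option maxHeartbeats 4000000 in
set_option maxRecDepth 100000 in
theorem stmt_2 (t : ℚ) (ht : t ≠ 0) (a A : ℚ)
    (ha : a = -1 / (4 * t ^ 2)) (hA : A = (t ^ 2 + 4) / 64)
    (x y : ℚ) (hxy : y ^ 2 + x * y + a * y = x ^ 3 + a * x ^ 2)
    (hx : x ≠ 0) (hxa : x + a ≠ 0)
    (X Y : ℚ)
    (hX : X = -A + (t * (x + 2 * a) * (2 * y + x + a) / (8 * x * (x + a))) ^ 2)
    (hY : Y = X ^ 2 -
      (x + a) ^ 2 * ((2 * y + x + a - 2 * t * x * (x + 2 * a)) / (8 * x * (x + a))) ^ 4) :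
    Y ^ 2 + X * Y + A * Y = X ^ 3 + A * X ^ 2 := by
  have ha' : a * (4 * t ^ 2) = -1 := by rw [ha]; field_simp
  have hA' : A * 64 = t ^ 2 + 4 := by rw [hA]; ring
  set u : ℚ := t * (x + 2 * a) * (2 * y + x + a) / (8 * x * (x + a)) with hu
  set v : ℚ := (2 * y + x + a - 2 * t * x * (x + 2 * a)) / (8 * x * (x + a)) with hv
  have key : Y = u * (x + a) * v ^ 2 := by
    rw [hY, hX, hu, hv]
    field_simp
    linear_combination (norm := skip) ((-8:ℚ)*a^4 + (128:ℚ)*a^6*t^4 + (-16:ℚ)*y*a^3 + (256:ℚ)*y*a^5*t^4 + (-16:ℚ)*y^2*a^2 + (256:ℚ)*y^2*a^4*t^4 + (-32:ℚ)*x*a^3 + (512:ℚ)*x*a^5*t^4 + (-48:ℚ)*x*y*a^2 + (768:ℚ)*x*y*a^4*t^4 + (-32:ℚ)*x*y^2*a + (512:ℚ)*x*y^2*a^3*t^4 + (-48:ℚ)*x^2*a^2 + (-16:ℚ)*x^2*a^3 + (128:ℚ)*x^2*a^4*t^2 + (-2048:ℚ)*x^2*a^4*t^2*A + (832:ℚ)*x^2*a^4*t^4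 + (256:ℚ)*x^2*a^5*t^4 + (-48:ℚ)*x^2*y*a + (896:ℚ)*x^2*y*a^3*t^4 + (-16:ℚ)*x^2*y^2 + (384:ℚ)*x^2*y^2*a^2*t^4 + (-32:ℚ)*x^3*a + (-48:ℚ)*x^3*a^2 + (384:ℚ)*x^3*a^3*t^2 + (-6144:ℚ)*x^3*a^3*t^2*A + (704:ℚ)*x^3*a^3*t^4 + (768:ℚ)*x^3*a^4*t^4 + (-16:ℚ)*x^3*y + (512:ℚ)*x^3*y*a^2*t^4 + (128:ℚ)*x^3*y^2*a*t^4 + (-8:ℚ)*x^4 + (-48:ℚ)*x^4*a + (416:ℚ)*x^4*a^2*t^2 + (-6656:ℚ)*x^4*a^2*t^2*A + (328:ℚ)*x^4*a^2*t^4 + (896:ℚ)*x^4*a^3*t^4 + (144:ℚ)*x^4*y*a*t^4 + (16:ℚ)*x^4*y^2*t^4 + (-16:ℚ)*x^5 + (192:ℚ)*x^5*a*t^2 + (-3072:ℚ)*x^5*a*t^2*A + (80:ℚ)*x^5*a*t^4 + (512:ℚ)*x^5*a^2*t^4 + (16:ℚ)*x^5*y*t^4 + (32:ℚ)*x^6*t^2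 + (-512:ℚ)*x^6*t^2*A + (8:ℚ)*x^6*t^4 + (144:ℚ)*x^6*a*t^4 + (16:ℚ)*x^7*t^4) * hxy
    subst ha hA
    field_simp
    ring
  have h1 : X + A = u ^ 2 := by rw [hX]; ring
  have h2 : X ^ 2 - Y = (x + a) ^ 2 * v ^ 4 := by rw [hY]; ring
  clear_value u v
  linear_combination (Y + u * (x + a) * v ^ 2) * key - u ^ 2 * h2 - (X ^ 2 - Y) * h1
end

section
/- Let t be a nonzero rational number, a = -1/(4t²), A = (t² + 4)/64. If (X, Y) ∈ ℚ² satisfies Y² + XY + AY = X³ + AX² with X + A ≠ 0 and X + 2A ≠ 0, then setting g = (2(X + 2A)(2Y + X + A) - tX(X + A)) / (4t(X + A)(X + 2A)), x = -a + ( X(2Y + X + A) / (2t(X + A)(X + 2A)) )², and y = x² - g⁴, the point (x, y) satisfies y² + xy + ay = x³ + ax². In particular, for every affine rational point (x, y) of E in the image of this dual 4-isogeny, the quantity x² - y is a fourth power of a nonzero rational number. -/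
theorem stmt_3 (t : ℚ) (ht : t ≠ 0) (a A : ℚ)
    (ha : a = -1 / (4 * t ^ 2)) (hA : A = (t ^ 2 + 4) / 64)
    (X Y : ℚ) (hXY : Y ^ 2 + X * Y + A * Y = X ^ 3 + A * X ^ 2)
    (hXA : X + A ≠ 0) (hX2A : X + 2 * A ≠ 0)
    (g x y : ℚ)
    (hg : g = (2 * (X + 2 * A) * (2 * Y + X + A) - t * X * (X + A)) /
      (4 * t * (X + A) * (X + 2 * A)))
    (hx : x = -a + (X * (2 * Y + X + A) / (2 * t * (X + A) * (X + 2 * A))) ^ 2)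
    (hy : y = x ^ 2 - g ^ 4) :
    (y ^ 2 + x * y + a * y = x ^ 3 + a * x ^ 2) ∧
      ∃ e : ℚ, e ≠ 0 ∧ x ^ 2 - y = e ^ 4 := by
  have hA' : 64 * A = t ^ 2 + 4 := by rw [hA]; ring
  have hx2 : x = ((X+A)^2*(X+2*A)^2 + (X*(2*Y+X+A))^2) / (2*t*(X+A)*(X+2*A))^2 := by
    rw [hx, ha]; field_simp; ring
  have key : x ^ 2 - g ^ 4 = (X * (2 * Y + X + A) / (2 * t * (X + A) * (X + 2 * A))) * g ^ 2 := by
    rw [hx2, hg]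
    have hE : (16*((X+A)^2*(X+2*A)^2 + (X*(2*Y+X+A))^2)^2 - (2*(X+2*A)*(2*Y+X+A) - t*X*(X+A))^4 - 4*(X*(2*Y+X+A))*(2*(X+2*A)*(2*Y+X+A) - t*X*(X+A))^2*(2*t*(X+A)*(X+2*A))) = 0 := by
      linear_combination ((-2048)*A^6 + (-4096)*Y^1*A^5 + (-4096)*Y^2*A^4 + (-8192)*X^1*A^5 + (-12288)*X^1*Y^1*A^4 + (-8192)*X^1*Y^2*A^3 + (-12800)*X^2*A^4 + (-4096)*X^2*A^5 + (-14336)*X^2*Y^1*A^3 + (-6144)*X^2*Y^2*A^2 + (-9728)*X^3*A^3 + (-12288)*X^3*A^4 + (-8192)*X^3*Y^1*A^2 + (-2048)*X^3*Y^2*A^1 + (-3456)*X^4*A^2 + (-14336)*X^4*A^3 + (-2048)*X^4*Y^1*A^1 + (-256)*X^5*A^1 + (-8192)*X^5*A^2 + (128)*X^6 + (-2048)*X^6*A^1 + (128)*t^2*X^2*A^4 + (384)*t^2*X^3*A^3 + (416)*t^2*X^4*A^2 + (192)*t^2*X^5*A^1 + (32)*t^2*X^6) * hXY + ((-32)*X^2*A^6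 + (-160)*X^3*A^5 + (-332)*X^4*A^4 + (-64)*X^4*A^5 + (-368)*X^5*A^3 + (-256)*X^5*A^4 + (-232)*X^6*A^2 + (-416)*X^6*A^3 + (-80)*X^7*A^1 + (-352)*X^7*A^2 + (-12)*X^8 + (-160)*X^8*A^1 + (-32)*X^9 + (1)*t^2*X^4*A^4 + (4)*t^2*X^5*A^3 + (6)*t^2*X^6*A^2 + (4)*t^2*X^7*A^1 + (1)*t^2*X^8) * hA'
    rw [← sub_eq_zero]
    refine (mul_eq_zero.mp (?_ : _ * (16 * (2*t*(X+A)*(X+2*A))^4) = 0)).resolve_right (mul_ne_zero (by norm_num) (pow_ne_zero 4 (mul_ne_zero (mul_ne_zero (mul_ne_zero two_ne_zero ht) hXA) hX2A)))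
    have gen : ∀ N M P d : ℚ, d ≠ 0 → ((N/d^2)^2 - (M/(2*d))^4 - (P/d)*(M/(2*d))^2) * (16*d^4) = 16*N^2 - M^4 - 4*P*M^2*d := by
      intro N M P d hd; field_simp; ring
    rw [show (4 * t * (X + A) * (X + 2 * A)) = 2*(2*t*(X+A)*(X+2*A)) by ring]
    calc _ = (16*((X+A)^2*(X+2*A)^2 + (X*(2*Y+X+A))^2)^2 - (2*(X+2*A)*(2*Y+X+A) - t*X*(X+A))^4 - 4*(X*(2*Y+X+A))*(2*(X+2*A)*(2*Y+X+A) - t*X*(X+A))^2*(2*t*(X+A)*(X+2*A))) := gen _ _ _ _ (mul_ne_zero (mul_ne_zero (mul_ne_zero two_ne_zero ht) hXA) hX2A)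
      _ = 0 := hE
  set s : ℚ := X * (2 * Y + X + A) / (2 * t * (X + A) * (X + 2 * A)) with hs
  have hsa : x + a = s ^ 2 := by rw [hx]; ring
  have ht2 : (0:ℚ) < 4 * t ^ 2 := by positivity
  have hxpos : 0 < x := by
    have h1 : x = 1 / (4 * t ^ 2) + s ^ 2 := by rw [hx, ha]; ring
    have h3 : (0:ℚ) < 1 / (4 * t ^ 2) := div_pos one_pos ht2
    have h4 : (0:ℚ) ≤ s ^ 2 := sq_nonneg s
    rw [h1]; linarith
  have hg0 : g ≠ 0 := by
    intro h
    have hx20 : x ^ 2 = 0 := by simpa [h] using key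
    have := pow_pos hxpos 2
    linarith
  refine ⟨?_, g, hg0, by rw [hy]; ring⟩
  rw [hy]
  linear_combination (x ^ 2 - g ^ 4 + s * g ^ 2) * key - g ^ 4 * hsa
end

section
/- For every nonzero rational number t, the only point of order 2 in the group E'_t(ℚ) is the point (0, 0); that is, E'_t(ℚ) contains exactly one point of order 2. -/
/-!
A point of order two is its own negative, so on a curve `y² = x (x² + a₂ x + a₄)` it has `y = 0`
and `x` is a root of `x (x² + a₂ x + a₄)`. If the discriminant `a₂² - 4 a₄` of the quadratic factor
is not a square, `x = 0` is the only root. For `E'_t` this discriminant is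
`4 (t² - 4)² - 4 (t² + 4)² = -64 t²`, which is negative for `t ≠ 0`.
-/

open WeierstrassCurve

/-- The elliptic curve `E'_t : V² = U³ - 2(t² - 4)U² + (t² + 4)²U`. -/
noncomputable def Et' (t : ℚ) : WeierstrassCurve.Affine ℚ :=
  { a₁ := 0, a₂ := -2 * (t ^ 2 - 4), a₃ := 0, a₄ := (t ^ 2 + 4) ^ 2, a₆ := 0 }

namespace WeierstrassCurve.Affine

variable {F : Type*} [Field F] {W : Affine F}

lemma nonsingular_zero_zero (ha₆ : W.a₆ = 0) (ha₄ : W.a₄ ≠ 0) : W.Nonsingular 0 0 := by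
  rw [nonsingular_iff, equation_iff]
  refine ⟨by simp [ha₆], Or.inl ?_⟩
  simpa using ha₄.symm

namespace Point

variable [DecidableEq F]

lemma two_nsmul_some_eq_zero_iff {x y : F} (h : W.Nonsingular x y) :
    2 • some x y h = 0 ↔ y = W.negY x y := by
  rw [two_nsmul, add_eq_zero_iff_eq_neg, neg_some, some.injEq]
  exact and_iff_right rfl

lemma addOrderOf_some_eq_two_iff {x y : F} (h : W.Nonsingular x y) :
    addOrderOf (some x y h) = 2 ↔ y = W.negY x y := by
  rw [addOrderOf_eq_prime_iff, two_nsmul_some_eq_zero_iff]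
  exact and_iff_left (some_ne_zero h)

lemma addOrderOf_some_zero_zero (ha₃ : W.a₃ = 0) (h₀ : W.Nonsingular 0 0) :
    addOrderOf (some 0 0 h₀) = 2 :=
  (addOrderOf_some_eq_two_iff h₀).mpr (by simp [negY, ha₃])

lemma eq_some_zero_zero_of_addOrderOf_eq_two [NeZero (2 : F)] (ha₁ : W.a₁ = 0) (ha₃ : W.a₃ = 0)
    (ha₆ : W.a₆ = 0) (hdisc : ∀ s : F, discrim 1 W.a₂ W.a₄ ≠ s ^ 2) (h₀ : W.Nonsingular 0 0)
    {P : W.Point} (hP : addOrderOf P = 2) : P = some 0 0 h₀ := by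
  cases P with
  | zero => simp [← zero_def] at hP
  | @some x y h =>
    have hy : y = 0 := by
      have hy_neg := (addOrderOf_some_eq_two_iff h).mp hP
      simp only [negY, ha₁, ha₃, zero_mul, sub_zero] at hy_neg
      rw [eq_neg_iff_add_eq_zero, ← two_mul] at hy_neg
      exact (mul_eq_zero.mp hy_neg).resolve_left two_ne_zero
    subst hy
    have hcubic : x * (1 * (x * x) + W.a₂ * x + W.a₄) = 0 := by
      have heq := (equation_iff x 0).mp h.1
      simp only [ha₁, ha₃, ha₆] at heq
      linear_combination -heq
    have hx : x = 0 :=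
      (mul_eq_zero.mp hcubic).resolve_right (quadratic_ne_zero_of_discrim_ne_sq hdisc x)
    subst hx
    rfl

end Point

end WeierstrassCurve.Affine

theorem stmt_6 (t : ℚ) (ht : t ≠ 0) :
    ∃ h0 : (Et' t).Nonsingular 0 0,
      addOrderOf (Affine.Point.some _ _ h0) = 2 ∧
        ∀ P : (Et' t).Point, addOrderOf P = 2 → P = Affine.Point.some _ _ h0 := by
  have hdisc : ∀ s : ℚ, discrim 1 (Et' t).a₂ (Et' t).a₄ ≠ s ^ 2 := by
    have hval : discrim 1 (Et' t).a₂ (Et' t).a₄ = -64 * t ^ 2 := by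
      simp only [discrim, Et']
      ring
    intro s hs
    nlinarith [sq_nonneg s, sq_pos_of_ne_zero ht]
  have h₀ : (Et' t).Nonsingular 0 0 :=
    Affine.nonsingular_zero_zero rfl (by simp only [Et']; positivity)
  exact ⟨h₀, Affine.Point.addOrderOf_some_zero_zero rfl h₀,
    fun P hP => Affine.Point.eq_some_zero_zero_of_addOrderOf_eq_two rfl rfl rfl hdisc h₀ hP⟩
end

section
/- For every nonzero rational number t, the group E'_t(ℚ) contains a point of order 8 if and only if there exists a nonzero rational number γ with t = (γ⁴ - 4)/(2γ²) (equivalently, if and only if √(t + √(t² + 4)) is rational). -/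
open WeierstrassCurve

namespace Et'Aux

open WeierstrassCurve.Affine WeierstrassCurve.Affine.Point

variable {t : ℚ}

lemma equation_iff'' {x y : ℚ} : (Et' t).Equation x y ↔
    y ^ 2 = x ^ 3 - 2 * (t ^ 2 - 4) * x ^ 2 + (t ^ 2 + 4) ^ 2 * x := by
  rw [WeierstrassCurve.Affine.equation_iff]
  simp only [Et']
  constructor <;> intro h <;> linear_combination h

lemma negY_eq (x y : ℚ) : (Et' t).negY x y = -y := by
  simp [WeierstrassCurve.Affine.negY, Et']

lemma ne_negY {x y : ℚ} (hy : y ≠ 0) : y ≠ (Et' t).negY x y := by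
  rw [negY_eq]
  intro h
  exact hy (by linarith)

lemma nonsingular_of {x y : ℚ} (he : (Et' t).Equation x y) (hy : y ≠ 0) :
    (Et' t).Nonsingular x y := by
  rw [WeierstrassCurve.Affine.nonsingular_iff]
  refine ⟨he, Or.inr ?_⟩
  show y ≠ -y - (Et' t).a₁ * x - (Et' t).a₃
  simp only [Et']
  intro h
  exact hy (by linarith [h])

lemma ns00 (ht : t ≠ 0) : (Et' t).Nonsingular 0 0 := by
  rw [WeierstrassCurve.Affine.nonsingular_zero]
  refine ⟨rfl, Or.inr ?_⟩
  show ((t ^ 2 + 4) ^ 2 : ℚ) ≠ 0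
  positivity

lemma some_eq {W : Affine ℚ} {x₁ y₁ x₂ y₂ : ℚ} {h₁ : W.Nonsingular x₁ y₁}
    {h₂ : W.Nonsingular x₂ y₂} (hx : x₁ = x₂) (hy : y₁ = y₂) :
    Point.some _ _ h₁ = Point.some _ _ h₂ := by
  subst hx; subst hy; rfl

lemma slope_self {x y : ℚ} (hy : y ≠ 0) :
    (Et' t).slope x x y y =
      (3 * x ^ 2 + 2 * (-2 * (t ^ 2 - 4)) * x + (t ^ 2 + 4) ^ 2) / (2 * y) := by
  rw [slope_of_Y_ne rfl (ne_negY hy), negY_eq]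
  show (3 * x ^ 2 + 2 * (Et' t).a₂ * x + (Et' t).a₄ - (Et' t).a₁ * y) / (y - -y) = _
  simp only [Et']
  ring_nf

lemma addX_self {x y : ℚ} (he : (Et' t).Equation x y) (hy : y ≠ 0) :
    (Et' t).addX x x ((Et' t).slope x x y y) =
      ((x ^ 2 - (t ^ 2 + 4) ^ 2) / (2 * y)) ^ 2 := by
  rw [equation_iff''] at he
  rw [slope_self hy]
  show _ ^ 2 + (Et' t).a₁ * _ - (Et' t).a₂ - x - x = _
  simp only [Et']
  field_simp
  ring_nf
  linear_combination (8 * t ^ 2 - 8 * x - 32) * he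

lemma two_torsion (ht : t ≠ 0) {x y : ℚ} (h : (Et' t).Nonsingular x y)
    (hh : Point.some _ _ h + Point.some _ _ h = 0) : x = 0 ∧ y = 0 := by
  by_cases hy : y = (Et' t).negY x y
  · rw [negY_eq] at hy
    have hy0 : y = 0 := by linarith
    subst hy0
    have he := h.1
    rw [equation_iff''] at he
    refine ⟨?_, rfl⟩
    have hfac : x * (x ^ 2 - 2 * (t ^ 2 - 4) * x + (t ^ 2 + 4) ^ 2) = 0 := by
      linear_combination -he
    rcases mul_eq_zero.mp hfac with h' | h'
    · exact h'
    · exfalso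
      have ht2 : (0:ℚ) < t ^ 2 := by positivity
      nlinarith [sq_nonneg (x - (t ^ 2 - 4))]
  · rw [add_self_of_Y_ne hy] at hh
    exact absurd hh (some_ne_zero _)

lemma add_self_eq_zero_zero (ht : t ≠ 0) {x₂ y₂ : ℚ} (h₂ : (Et' t).Nonsingular x₂ y₂)
    (hx₂ : x₂ = t ^ 2 + 4) (hy₂ : y₂ ≠ 0) :
    Point.some _ _ h₂ + Point.some _ _ h₂ = Point.some _ _ (ns00 ht) := by
  rw [add_self_of_Y_ne (ne_negY hy₂)]
  have he := h₂.1
  rw [equation_iff''] at he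
  subst hx₂
  have hsq : y₂ ^ 2 = 16 * (t ^ 2 + 4) ^ 2 := by linear_combination he
  apply some_eq
  · rw [slope_self hy₂]
    show _ ^ 2 + (Et' t).a₁ * _ - (Et' t).a₂ - _ - _ = 0
    simp only [Et']
    field_simp
    linear_combination (-64) * hsq
  · rw [slope_self hy₂]
    show (Et' t).negY _ _ = 0
    rw [negY_eq]
    show -((_ / _) * ((Et' t).addX _ _ _ - _) + y₂) = 0
    show -((_ / _) * ((_ ^ 2 + (Et' t).a₁ * _ - (Et' t).a₂ - _ - _) - _) + y₂) = 0
    simp only [Et']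
    field_simp
    linear_combination (-8 * y₂ ^ 2 + 2048 * t ^ 2 + 8192) * hsq

lemma reverse_aux {γ : ℚ} (hγ0 : γ ≠ 0) {t : ℚ} (ht : t ≠ 0)
    (htγ : t = (γ ^ 4 - 4) / (2 * γ ^ 2)) :
    ∃ P : (Et' t).Point, addOrderOf P = 8 := by
  have htdef := htγ
  set x : ℚ := (γ ^ 4 + 4) * (γ ^ 2 + 2 * γ + 2) ^ 2 / (4 * γ ^ 4) with hxdef
  set y : ℚ := (γ ^ 4 + 4) * (γ ^ 2 + 2 * γ + 2) * (γ ^ 4 + 2 * γ ^ 3 + 4 * γ ^ 2 + 4 * γ + 4) /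
    (2 * γ ^ 5) with hydef
  have f1 : (γ ^ 4 + 4 : ℚ) ≠ 0 := by positivity
  have f2 : (γ ^ 2 + 2 * γ + 2 : ℚ) ≠ 0 := by nlinarith [sq_nonneg (γ + 1)]
  have f3 : (γ ^ 4 + 2 * γ ^ 3 + 4 * γ ^ 2 + 4 * γ + 4 : ℚ) ≠ 0 := by
    nlinarith [sq_nonneg (γ ^ 2 + γ), sq_nonneg (3 * γ + 2)]
  have hy : y ≠ 0 := by
    rw [hydef]
    exact div_ne_zero (mul_ne_zero (mul_ne_zero f1 f2) f3)
      (by positivity)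
  have he : (Et' t).Equation x y := by
    rw [equation_iff'', hxdef, hydef, htdef]
    field_simp
    ring
  have h : (Et' t).Nonsingular x y := nonsingular_of he hy
  have hX2 : (Et' t).addX x x ((Et' t).slope x x y y) = t ^ 2 + 4 := by
    rw [addX_self he hy, hxdef, hydef, htdef]
    field_simp
    rw [div_eq_iff (mul_ne_zero (pow_ne_zero 2 (by convert f2 using 1; ring))
      (pow_ne_zero 2 (by convert f3 using 1; ring)))]
    ring
  have H2 : (Et' t).Nonsingular ((Et' t).addX x x ((Et' t).slope x x y y))
      ((Et' t).addY x x y ((Et' t).slope x x y y)) :=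
    nonsingular_add h h fun hxy => ne_negY hy hxy.right
  have hE2 := equation_iff''.mp H2.1
  rw [hX2] at hE2
  have hY2sq : ((Et' t).addY x x y ((Et' t).slope x x y y)) ^ 2 = 16 * (t ^ 2 + 4) ^ 2 := by
    linear_combination hE2
  have hY2 : (Et' t).addY x x y ((Et' t).slope x x y y) ≠ 0 := by
    intro h0
    rw [h0] at hY2sq
    nlinarith [sq_nonneg t, sq_nonneg (t ^ 2)]
  have hfour := add_self_eq_zero_zero ht H2 hX2 hY2
  have hP2 : (2 : ℕ) • Point.some _ _ h = Point.some _ _ H2 := by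
    rw [two_nsmul]
    exact add_self_of_Y_ne (ne_negY hy)
  have hP4 : (4 : ℕ) • Point.some _ _ h = Point.some _ _ (ns00 ht) := by
    rw [show (4 : ℕ) = 2 * 2 by norm_num, ← smul_smul, hP2, two_nsmul, hfour]
  have hP8 : (8 : ℕ) • Point.some _ _ h = 0 := by
    rw [show (8 : ℕ) = 2 * 4 by norm_num, ← smul_smul, hP4, two_nsmul]
    exact add_self_of_Y_eq (by rw [negY_eq]; norm_num)
  refine ⟨Point.some _ _ h, ?_⟩
  have h48 : addOrderOf (Point.some _ _ h) = 2 ^ (2 + 1) := by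
    apply addOrderOf_eq_prime_pow
    · rw [show (2 : ℕ) ^ 2 = 4 by norm_num, hP4]
      exact some_ne_zero _
    · rw [show (2 : ℕ) ^ (2 + 1) = 8 by norm_num]
      exact hP8
  rw [h48]; norm_num

set_option maxHeartbeats 1000000 in
lemma forward_aux {t : ℚ} (ht : t ≠ 0) (P : (Et' t).Point)
    (hP8 : addOrderOf P = 8) :
    ∃ γ : ℚ, γ ≠ 0 ∧ t = (γ ^ 4 - 4) / (2 * γ ^ 2) := by
  have h8 : (8 : ℕ) • P = 0 := by rw [← hP8]; exact addOrderOf_nsmul_eq_zero P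
  have h4ne : (4 : ℕ) • P ≠ 0 := by
    intro hc
    have := addOrderOf_dvd_of_nsmul_eq_zero hc
    rw [hP8] at this
    norm_num at this
  have h2ne : (2 : ℕ) • P ≠ 0 := by
    intro hc
    have := addOrderOf_dvd_of_nsmul_eq_zero hc
    rw [hP8] at this
    norm_num at this
  rcases P with _ | @⟨x, y, h⟩
  · rw [show (Point.zero : (Et' t).Point) = 0 from rfl] at hP8
    simp at hP8
  have hy : y ≠ 0 := by
    intro hy0
    subst hy0
    exact h2ne (by rw [two_nsmul]; exact add_self_of_Y_eq (by rw [negY_eq, _root_.neg_zero]))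
  have hy' : y ≠ (Et' t).negY x y := ne_negY hy
  have h2eq : (2 : ℕ) • Point.some _ _ h = Point.some _ _ (nonsingular_add h h fun hxy => hy' hxy.right) := by
    rw [two_nsmul, add_self_of_Y_ne hy']
  have H2 : (Et' t).Nonsingular ((Et' t).addX x x ((Et' t).slope x x y y))
      ((Et' t).addY x x y ((Et' t).slope x x y y)) :=
    nonsingular_add h h fun hxy => hy' hxy.right
  have hY2 : (Et' t).addY x x y ((Et' t).slope x x y y) ≠ 0 := by
    intro h0
    apply h4ne
    rw [show (4 : ℕ) = 2 * 2 by norm_num, ← smul_smul, h2eq, two_nsmul]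
    exact add_self_of_Y_eq (by rw [negY_eq, h0, _root_.neg_zero])
  have hY2' := ne_negY (t := t) (x := (Et' t).addX x x ((Et' t).slope x x y y)) hY2
  have H4 : (Et' t).Nonsingular _ _ := nonsingular_add H2 H2 fun hxy => hY2' hxy.right
  have h4eq : (4 : ℕ) • Point.some _ _ h = Point.some _ _ H4 := by
    rw [show (4 : ℕ) = 2 * 2 by norm_num, ← smul_smul, h2eq, two_nsmul,
      add_self_of_Y_ne hY2']
  have h44 : Point.some _ _ H4 + Point.some _ _ H4 = 0 := by
    rw [← h4eq, ← add_nsmul]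
    rw [show (4 + 4 : ℕ) = 8 by norm_num]
    exact h8
  obtain ⟨hX40, -⟩ := two_torsion ht H4 h44
  -- hX40 : addX X2 X2 (slope X2 X2 Y2 Y2) = 0
  have haddX2 := addX_self (t := t) H2.1 hY2
  rw [hX40] at haddX2
  have hdiv0 := pow_eq_zero_iff (n := 2) (by norm_num) |>.mp haddX2.symm
  have hX2sq : ((Et' t).addX x x ((Et' t).slope x x y y)) ^ 2 = (t ^ 2 + 4) ^ 2 := by
    rw [div_eq_zero_iff] at hdiv0
    rcases hdiv0 with h' | h'
    · linarith [h']
    · exact absurd h' (mul_ne_zero two_ne_zero hY2)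
  have hE2 := equation_iff''.mp H2.1
  have hcases : ((Et' t).addX x x ((Et' t).slope x x y y) - (t ^ 2 + 4)) *
      ((Et' t).addX x x ((Et' t).slope x x y y) + (t ^ 2 + 4)) = 0 := by
    linear_combination hX2sq
  have ht2 : (0 : ℚ) < t ^ 2 := by
    rcases lt_or_gt_of_ne ht with h' | h' <;> nlinarith
  have hX2val : (Et' t).addX x x ((Et' t).slope x x y y) = t ^ 2 + 4 := by
    rcases mul_eq_zero.mp hcases with h' | h'
    · linarith
    · exfalso
      have hX2neg : (Et' t).addX x x ((Et' t).slope x x y y) = -(t ^ 2 + 4) := by linarith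
      rw [hX2neg] at hE2
      have hneg : ((Et' t).addY x x y ((Et' t).slope x x y y)) ^ 2
          = -4 * t ^ 2 * (t ^ 2 + 4) ^ 2 := by linear_combination hE2
      have hpos : (0 : ℚ) < ((Et' t).addY x x y ((Et' t).slope x x y y)) ^ 2 :=
        lt_of_le_of_ne (sq_nonneg _) (Ne.symm (pow_ne_zero 2 hY2))
      have hprod : (0 : ℚ) < t ^ 2 * (t ^ 2 + 4) ^ 2 :=
        mul_pos ht2 (by positivity)
      linarith
  -- now the descent
  have hs : ((x ^ 2 - (t ^ 2 + 4) ^ 2) / (2 * y)) ^ 2 = t ^ 2 + 4 := by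
    rw [← addX_self h.1 hy]
    exact hX2val
  obtain ⟨s, hsdef⟩ : ∃ s : ℚ, s = (x ^ 2 - (t ^ 2 + 4) ^ 2) / (2 * y) := ⟨_, rfl⟩
  rw [← hsdef] at hs
  have hsy : s * (2 * y) = x ^ 2 - (t ^ 2 + 4) ^ 2 := by
    rw [hsdef]
    exact div_mul_cancel₀ _ (mul_ne_zero two_ne_zero hy)
  have he := equation_iff''.mp h.1
  clear hP8 h8 h4ne h2ne h2eq H2 hY2 hY2' H4 h4eq h44 hX40 haddX2 hdiv0 hX2sq hE2 hcases hX2val hy' h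
  have hs0 : s ≠ 0 := by
    intro h0
    rw [h0] at hs
    nlinarith [hs]
  have hquart : (x ^ 2 + (8 * s - 2 * s ^ 2) * x + s ^ 4) *
      (x ^ 2 - (2 * s ^ 2 + 8 * s) * x + s ^ 4) = 0 := by
    linear_combination (-(x ^ 2 - (t ^ 2 + 4) ^ 2 + 2 * y * s)) * hsy + (4 * s ^ 2) * he +
      (2 * (3 * s ^ 2 - (t ^ 2 + 4)) * x ^ 2 - 4 * s ^ 2 * (s ^ 2 + (t ^ 2 + 4)) * x +
        (s ^ 2 + (t ^ 2 + 4)) * (s ^ 4 + (t ^ 2 + 4) ^ 2)) * hs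
  have h4s : (4 * s : ℚ) ≠ 0 := mul_ne_zero (by norm_num) hs0
  rcases mul_eq_zero.mp hquart with hA | hB
  · -- case A : gamma^2 = t - s
    obtain ⟨m, hmdef⟩ : ∃ m : ℚ, m = (2 * x + 8 * s - 2 * s ^ 2) / (4 * s) := ⟨_, rfl⟩
    have hm : m ^ 2 = 4 - 2 * s := by
      rw [hmdef, div_pow, div_eq_iff (pow_ne_zero 2 h4s)]
      linear_combination 4 * hA
    have hm0 : m ≠ 0 := by
      intro h0
      rw [h0] at hm
      have hs2 : s = 2 := by nlinarith [hm]
      rw [hs2] at hs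
      nlinarith [ht2]
    have hγ0 : (2 - s + t) / m ≠ 0 := by
      intro h0
      rcases div_eq_zero_iff.mp h0 with h' | h'
      · exact ht (by linear_combination (1 / 4) * hs + ((s + t + 2) / 4) * h')
      · exact hm0 h'
    have hγ2 : ((2 - s + t) / m) ^ 2 = t - s := by
      rw [div_pow, div_eq_iff (pow_ne_zero 2 hm0)]
      linear_combination (s - t) * hm - hs
    refine ⟨(2 - s + t) / m, hγ0, ?_⟩
    rw [eq_div_iff (mul_ne_zero two_ne_zero (pow_ne_zero 2 hγ0))]
    linear_combination (t + s - ((2 - s + t) / m) ^ 2) * hγ2 - hs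
  · -- case B : gamma^2 = t + s
    obtain ⟨m, hmdef⟩ : ∃ m : ℚ, m = (2 * x - 2 * s ^ 2 - 8 * s) / (4 * s) := ⟨_, rfl⟩
    have hm : m ^ 2 = 4 + 2 * s := by
      rw [hmdef, div_pow, div_eq_iff (pow_ne_zero 2 h4s)]
      linear_combination 4 * hB
    have hm0 : m ≠ 0 := by
      intro h0
      rw [h0] at hm
      have hs2 : s = -2 := by nlinarith [hm]
      rw [hs2] at hs
      nlinarith [ht2]
    have hγ0 : (2 + s + t) / m ≠ 0 := by
      intro h0
      rcases div_eq_zero_iff.mp h0 with h' | h'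
      · exact ht (by linear_combination (1 / 4) * hs + ((t + 2 - s) / 4) * h')
      · exact hm0 h'
    have hγ2 : ((2 + s + t) / m) ^ 2 = t + s := by
      rw [div_pow, div_eq_iff (pow_ne_zero 2 hm0)]
      linear_combination (-(t + s)) * hm - hs
    refine ⟨(2 + s + t) / m, hγ0, ?_⟩
    rw [eq_div_iff (mul_ne_zero two_ne_zero (pow_ne_zero 2 hγ0))]
    linear_combination (t - s - ((2 + s + t) / m) ^ 2) * hγ2 - hs

end Et'Aux

open Et'Aux in
theorem stmt_9 (t : ℚ) (ht : t ≠ 0) :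
    (∃ P : (Et' t).Point, addOrderOf P = 8) ↔
      ∃ γ : ℚ, γ ≠ 0 ∧ t = (γ ^ 4 - 4) / (2 * γ ^ 2) := by
  constructor
  · rintro ⟨P, hP8⟩
    exact forward_aux ht P hP8
  · rintro ⟨γ, hγ0, htγ⟩
    exact reverse_aux hγ0 ht htγ
end

section
/- Let γ be a nonzero rational number with t = (γ⁴ - 4)/(2γ²) nonzero, and set A = (t² + 4)/64. Then the point R = ( (γ⁴ + 4)(γ² + 2γ + 2)/(64γ³), (γ⁴ + 4)²(γ² + 2γ + 2)/(1024γ⁵) ) lies on the curve E' and has order exactly 8 in the group E'(ℚ). -/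
/-! `E'` is in Tate normal form `Y² + XY + AY = X³ + AX²`, on which `(0, 0)` has order 4: its
double is `(-A, 0)`, a point of order 2. When `A = (w (w - 1))²` is a square, the point
`(w² (w - 1), w³ (w - 1)²)` lies on the curve and its tangent, of slope `w² - 1`, passes through
`-(0, 0) = (0, -A)`; so it doubles to `(0, 0)` and has order 8. The point `R` is this point for
`w = (γ² + 2γ + 2) / (4γ)`, where `w (w - 1) = (γ⁴ + 4) / (16γ²)`. -/

open WeierstrassCurve

/-- The elliptic curve `E' : Y² + XY + AY = X³ + AX²` with `A = (t² + 4)/64`. -/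
noncomputable def Ecurve' (t : ℚ) : WeierstrassCurve.Affine ℚ :=
  { a₁ := 1, a₂ := (t ^ 2 + 4) / 64, a₃ := (t ^ 2 + 4) / 64, a₄ := 0, a₆ := 0 }

theorem addOrderOf_eq_prime_pow_succ_of_nsmul_eq {G : Type*} [AddMonoid G] {p n : ℕ}
    [hp : Fact p.Prime] {x y : G} (hxy : p • x = y) (hy : addOrderOf y = p ^ (n + 1)) :
    addOrderOf x = p ^ (n + 2) := by
  have hpow (k : ℕ) : p ^ (k + 1) • x = p ^ k • y := by
    rw [pow_succ', mul_nsmul, hxy]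
  apply addOrderOf_eq_prime_pow
  · rw [hpow]
    refine nsmul_ne_zero_of_lt_addOrderOf (pow_ne_zero _ hp.out.ne_zero) ?_
    rw [hy]
    exact Nat.pow_lt_pow_succ hp.out.one_lt
  · rw [hpow, ← hy]
    exact addOrderOf_nsmul_eq_zero y

namespace WeierstrassCurve.Affine.Point

variable {F : Type*} [Field F] [DecidableEq F] {W : Affine F}

theorem two_nsmul_some {x y x' y' : F} (h : W.Nonsingular x y) (h' : W.Nonsingular x' y')
    (hy : y ≠ W.negY x y) (hx' : W.addX x x (W.slope x x y y) = x')
    (hy' : W.addY x x y (W.slope x x y y) = y') :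
    2 • some _ _ h = some _ _ h' := by
  subst hx' hy'
  rw [two_nsmul, add_self_of_Y_ne hy]

end WeierstrassCurve.Affine.Point

open WeierstrassCurve.Affine

section FourTorsion

variable {F : Type*} [Field F]

def fourTorsionCurve (A : F) : Affine F :=
  { a₁ := 1, a₂ := A, a₃ := A, a₄ := 0, a₆ := 0 }

variable {A : F}

theorem fourTorsionCurve_nonsingular_zero_zero (hA : A ≠ 0) :
    (fourTorsionCurve A).Nonsingular 0 0 := by
  rw [nonsingular_iff]
  refine ⟨by simp [fourTorsionCurve, equation_iff], Or.inr ?_⟩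
  simpa [fourTorsionCurve] using hA

theorem fourTorsionCurve_nonsingular_neg_zero (hA : A ≠ 0) :
    (fourTorsionCurve A).Nonsingular (-A) 0 := by
  rw [nonsingular_iff]
  refine ⟨by simp [fourTorsionCurve, equation_iff]; ring, Or.inl ?_⟩
  simp only [fourTorsionCurve]
  intro h
  exact hA (pow_eq_zero_iff two_ne_zero |>.mp (by linear_combination -h))

variable [DecidableEq F]

theorem fourTorsionCurve_addOrderOf_neg_zero (hA : A ≠ 0) :
    addOrderOf (Point.some _ _ (fourTorsionCurve_nonsingular_neg_zero hA)) = 2 := by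
  refine addOrderOf_eq_prime ?_ (Point.some_ne_zero _)
  rw [two_nsmul]
  exact Point.add_self_of_Y_eq (by simp [fourTorsionCurve])

theorem fourTorsionCurve_two_nsmul_zero_zero (hA : A ≠ 0) :
    2 • Point.some _ _ (fourTorsionCurve_nonsingular_zero_zero hA) =
      Point.some _ _ (fourTorsionCurve_nonsingular_neg_zero hA) := by
  have hY : (0 : F) ≠ (fourTorsionCurve A).negY 0 0 := by
    simpa [fourTorsionCurve] using hA
  refine Point.two_nsmul_some _ _ hY ?_ ?_
  all_goals
    rw [slope_of_Y_ne rfl hY]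
    simp [fourTorsionCurve, addY]

theorem fourTorsionCurve_addOrderOf_zero_zero (hA : A ≠ 0) :
    addOrderOf (Point.some _ _ (fourTorsionCurve_nonsingular_zero_zero hA)) = 4 :=
  addOrderOf_eq_prime_pow_succ_of_nsmul_eq (p := 2) (n := 0)
    (fourTorsionCurve_two_nsmul_zero_zero hA) (fourTorsionCurve_addOrderOf_neg_zero hA)

end FourTorsion

section EightTorsion

variable {F : Type*} [Field F] {w : F}

theorem eightTorsionPoint_Y_ne_negY (hw : w * (w - 1) * (2 * w - 1) ≠ 0) :
    w ^ 3 * (w - 1) ^ 2 ≠ (fourTorsionCurve ((w * (w - 1)) ^ 2)).negY (w ^ 2 * (w - 1))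
      (w ^ 3 * (w - 1) ^ 2) := by
  have hdiff : w ^ 3 * (w - 1) ^ 2 - (fourTorsionCurve ((w * (w - 1)) ^ 2)).negY
      (w ^ 2 * (w - 1)) (w ^ 3 * (w - 1) ^ 2) = w ^ 2 * (w * (w - 1) * (2 * w - 1)) := by
    simp only [fourTorsionCurve, negY]
    ring
  rw [← sub_ne_zero, hdiff]
  exact mul_ne_zero (pow_ne_zero 2 (left_ne_zero_of_mul (left_ne_zero_of_mul hw))) hw

theorem eightTorsionPoint_nonsingular (hw : w * (w - 1) * (2 * w - 1) ≠ 0) :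
    (fourTorsionCurve ((w * (w - 1)) ^ 2)).Nonsingular
      (w ^ 2 * (w - 1)) (w ^ 3 * (w - 1) ^ 2) := by
  rw [nonsingular_iff]
  refine ⟨?_, Or.inr (eightTorsionPoint_Y_ne_negY hw)⟩
  simp only [fourTorsionCurve, equation_iff]
  ring

variable [DecidableEq F]

theorem eightTorsionPoint_two_nsmul (hw : w * (w - 1) * (2 * w - 1) ≠ 0) :
    2 • Point.some _ _ (eightTorsionPoint_nonsingular hw) =
      Point.some _ _ (fourTorsionCurve_nonsingular_zero_zero (A := (w * (w - 1)) ^ 2)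
        (pow_ne_zero 2 (left_ne_zero_of_mul hw))) := by
  have hslope : (fourTorsionCurve ((w * (w - 1)) ^ 2)).slope (w ^ 2 * (w - 1)) (w ^ 2 * (w - 1))
      (w ^ 3 * (w - 1) ^ 2) (w ^ 3 * (w - 1) ^ 2) = w ^ 2 - 1 := by
    rw [slope_of_Y_ne rfl (eightTorsionPoint_Y_ne_negY hw), div_eq_iff]
    · simp only [fourTorsionCurve, negY]
      ring
    · exact sub_ne_zero.mpr (eightTorsionPoint_Y_ne_negY hw)
  refine Point.two_nsmul_some _ _ (eightTorsionPoint_Y_ne_negY hw) ?_ ?_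
  all_goals
    simp only [addY, negAddY, addX]
    rw [hslope]
    simp only [negY, fourTorsionCurve]
    ring

theorem eightTorsionPoint_addOrderOf (hw : w * (w - 1) * (2 * w - 1) ≠ 0) :
    addOrderOf (Point.some _ _ (eightTorsionPoint_nonsingular hw)) = 8 :=
  addOrderOf_eq_prime_pow_succ_of_nsmul_eq (p := 2) (n := 1) (eightTorsionPoint_two_nsmul hw)
    (fourTorsionCurve_addOrderOf_zero_zero (pow_ne_zero 2 (left_ne_zero_of_mul hw)))

end EightTorsion

theorem stmt_10_general (γ t : ℚ) (hγ : γ ≠ 0) (htγ : t = (γ ^ 4 - 4) / (2 * γ ^ 2)) :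
    ∃ h : (Ecurve' t).Nonsingular
        ((γ ^ 4 + 4) * (γ ^ 2 + 2 * γ + 2) / (64 * γ ^ 3))
        ((γ ^ 4 + 4) ^ 2 * (γ ^ 2 + 2 * γ + 2) / (1024 * γ ^ 5)),
      addOrderOf (Affine.Point.some _ _ h) = 8 := by
  set w : ℚ := (γ ^ 2 + 2 * γ + 2) / (4 * γ)
  have hw : w * (w - 1) * (2 * w - 1) ≠ 0 := by
    have : w * (w - 1) * (2 * w - 1) =
        ((γ + 1) ^ 2 + 1) * ((γ - 1) ^ 2 + 1) * (γ ^ 2 + 2) / (32 * γ ^ 3) := by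
      simp only [w]
      field_simp
      ring
    rw [this]
    positivity
  have hcurve : Ecurve' t = fourTorsionCurve ((w * (w - 1)) ^ 2) := by
    simp only [Ecurve', fourTorsionCurve, htγ, w]
    congr 1 <;> field_simp <;> ring
  have hx : (γ ^ 4 + 4) * (γ ^ 2 + 2 * γ + 2) / (64 * γ ^ 3) = w ^ 2 * (w - 1) := by
    simp only [w]
    field_simp
    ring
  have hy : (γ ^ 4 + 4) ^ 2 * (γ ^ 2 + 2 * γ + 2) / (1024 * γ ^ 5) = w ^ 3 * (w - 1) ^ 2 := by
    simp only [w]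
    field_simp
    ring
  rw [hcurve, hx, hy]
  exact ⟨_, eightTorsionPoint_addOrderOf hw⟩

theorem stmt_10 (γ t : ℚ) (hγ : γ ≠ 0) (htγ : t = (γ ^ 4 - 4) / (2 * γ ^ 2))
    (ht : t ≠ 0) :
    ∃ h : (Ecurve' t).Nonsingular
        ((γ ^ 4 + 4) * (γ ^ 2 + 2 * γ + 2) / (64 * γ ^ 3))
        ((γ ^ 4 + 4) ^ 2 * (γ ^ 2 + 2 * γ + 2) / (1024 * γ ^ 5)),
      addOrderOf (Affine.Point.some _ _ h) = 8 :=
  stmt_10_general γ t hγ htγ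
end

section
/- Let K be a field of characteristic zero, let t, δ, z, w ∈ K with t ≠ 0 and δ ≠ 0, and set d = δ⁴, a = -1/(4t²), A = (t² + 4)/64. Suppose d(w + az²)z² = (w² - d)², z ≠ 0, and δz - 2(w - δ²) ≠ 0. Then the pair (X, Y) defined by X = 4A(w - δ²)/(δz - 2(w - δ²)) and Y = (X + A)(-δz + t(w + δ²))/(2δz) satisfies Y² + XY + AY = X³ + AX². (This is the isomorphism θ: C'_d → E' defined over any field containing a fourth root of d.) -/
theorem stmt_19 (K : Type*) [Field K] [CharZero K]
    (t δ z w : K) (ht : t ≠ 0) (hδ : δ ≠ 0)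
    (d a A : K) (hd : d = δ ^ 4) (ha : a = -1 / (4 * t ^ 2))
    (hA : A = (t ^ 2 + 4) / 64)
    (hzw : d * (w + a * z ^ 2) * z ^ 2 = (w ^ 2 - d) ^ 2)
    (hz : z ≠ 0) (hden : δ * z - 2 * (w - δ ^ 2) ≠ 0)
    (X Y : K)
    (hX : X = 4 * A * (w - δ ^ 2) / (δ * z - 2 * (w - δ ^ 2)))
    (hY : Y = (X + A) * (-(δ * z) + t * (w + δ ^ 2)) / (2 * δ * z)) :
    Y ^ 2 + X * Y + A * Y = X ^ 3 + A * X ^ 2 := by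
  have h4 : (4:K) * t ^ 2 ≠ 0 := mul_ne_zero (by norm_num) (pow_ne_zero 2 ht)
  have hM : (2:K) * δ * z ≠ 0 := mul_ne_zero (mul_ne_zero (by norm_num) hδ) hz
  have hE2 : X * (δ * z - 2 * (w - δ ^ 2)) = 4 * A * (w - δ ^ 2) := by
    rw [hX, div_mul_cancel₀ _ hden]
  have hE1 : Y * ((δ * z - 2 * (w - δ ^ 2)) * (2 * δ * z))
      = (4 * A * (w - δ ^ 2) + A * (δ * z - 2 * (w - δ ^ 2)))
        * (-(δ * z) + t * (w + δ ^ 2)) := by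
    rw [hY, hX, div_add' _ _ _ hden, div_mul_eq_mul_div _ (δ * z - 2 * (w - δ ^ 2)), div_div,
      div_mul_cancel₀ _ (mul_ne_zero hden hM)]
  have hzw' : δ ^ 4 * (4 * t ^ 2 * w - z ^ 2) * z ^ 2 = (w ^ 2 - δ ^ 4) ^ 2 * (4 * t ^ 2) := by
    rw [hd, ha] at hzw
    field_simp at hzw
    linear_combination hzw
  have hF : ((δ * z - 2 * (w - δ ^ 2)) ^ 3 * (2 * δ * z) ^ 2) ≠ 0 :=
    mul_ne_zero (pow_ne_zero 3 hden) (pow_ne_zero 2 hM)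
  apply mul_right_cancel₀ hF
  linear_combination ((12:K)*δ*z*w^2*A + (8:K)*δ*z*w^2*Y + (8:K)*δ*z*w^2*X + (-8:K)*δ^2*z^2*w*A + (-8:K)*δ^2*z^2*w*Y + (-8:K)*δ^2*z^2*w*X + (-24:K)*δ^3*z*w*A + (-16:K)*δ^3*z*w*Y + (-16:K)*δ^3*z*w*X + (1:K)*δ^3*z^3*A + (2:K)*δ^3*z^3*Y + (2:K)*δ^3*z^3*X + (8:K)*δ^4*z^2*A + (8:K)*δ^4*z^2*Y + (8:K)*δ^4*z^2*X + (12:K)*δ^5*z*A + (8:K)*δ^5*z*Y + (8:K)*δ^5*z*X + (-4:K)*t*w^3*A + (4:K)*t*δ^2*w^2*A + (1:K)*t*δ^2*z^2*w*A + (4:K)*t*δ^4*w*A + (1:K)*t*δ^4*z^2*A + (-4:K)*t*δ^6*A) * hE1 + ((8:K)*δ^2*z^2*w^2*A + (-32:K)*δ^2*z^2*w^2*A^2 + (16:K)*δ^2*z^2*w^2*X*A + (-16:K)*δ^2*z^2*w^2*X^2 + (-16:K)*δ^3*z^3*w*A^2 + (16:K)*δ^3*z^3*w*X^2 + (-16:K)*δ^4*z^2*w*A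 + (64:K)*δ^4*z^2*w*A^2 + (-32:K)*δ^4*z^2*w*X*A + (32:K)*δ^4*z^2*w*X^2 + (-2:K)*δ^4*z^4*A + (-4:K)*δ^4*z^4*X*A + (-4:K)*δ^4*z^4*X^2 + (16:K)*δ^5*z^3*A^2 + (-16:K)*δ^5*z^3*X^2 + (8:K)*δ^6*z^2*A + (-32:K)*δ^6*z^2*A^2 + (16:K)*δ^6*z^2*X*A + (-16:K)*δ^6*z^2*X^2 + (-8:K)*t*δ*z*w^3*A + (8:K)*t*δ^3*z*w^2*A + (2:K)*t*δ^3*z^3*w*A + (8:K)*t*δ^5*z*w*A + (2:K)*t*δ^5*z^3*A + (-8:K)*t*δ^7*z*A) * hE2 + (((1)/128:K)*w + ((1)/256:K)*δ*z + ((-1)/128:K)*δ^2 + ((1)/256:K)*t^2*w + ((1)/512:K)*t^2*δ*z + ((-1)/256:K)*t^2*δ^2 + ((1)/2048:K)*t^4*w + ((1)/4096:K)*t^4*δ*z + ((-1)/2048:K)*t^4*δ^2) * hzw' + ((-128:K)*δ^2*z^2*w^3*A^2 + (-64:K)*δ^3*z^3*w^2*A^2 + (384:K)*δ^4*z^2*w^2*A^2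 + ((-1)/8:K)*δ^4*z^4*w + (-2:K)*δ^4*z^4*w*A + (128:K)*δ^5*z^3*w*A^2 + ((-1)/16:K)*δ^5*z^5 + (-1:K)*δ^5*z^5*A + (-384:K)*δ^6*z^2*w*A^2 + ((1)/8:K)*δ^6*z^4 + (2:K)*δ^6*z^4*A + (-64:K)*δ^7*z^3*A^2 + (128:K)*δ^8*z^2*A^2 + ((-1)/2:K)*t^2*w^5 + (-8:K)*t^2*w^5*A + ((-1)/4:K)*t^2*δ*z*w^4 + (-4:K)*t^2*δ*z*w^4*A + ((1)/2:K)*t^2*δ^2*w^4 + (8:K)*t^2*δ^2*w^4*A + (1:K)*t^2*δ^4*w^3 + (16:K)*t^2*δ^4*w^3*A + ((1)/2:K)*t^2*δ^4*z^2*w^2 + (8:K)*t^2*δ^4*z^2*w^2*A + ((-1)/32:K)*t^2*δ^4*z^4*w + ((1)/2:K)*t^2*δ^5*z*w^2 + (8:K)*t^2*δ^5*z*w^2*A + ((1)/4:K)*t^2*δ^5*z^3*w + (4:K)*t^2*δ^5*z^3*w*A + ((-1)/64:K)*t^2*δ^5*z^5 + (-1:K)*t^2*δ^6*w^2 + (-16:K)*t^2*δ^6*w^2*A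 + ((-1)/2:K)*t^2*δ^6*z^2*w + (-8:K)*t^2*δ^6*z^2*w*A + ((1)/32:K)*t^2*δ^6*z^4 + ((-1)/2:K)*t^2*δ^8*w + (-8:K)*t^2*δ^8*w*A + ((-1)/4:K)*t^2*δ^9*z + (-4:K)*t^2*δ^9*z*A + ((1)/2:K)*t^2*δ^10 + (8:K)*t^2*δ^10*A + ((-1)/8:K)*t^4*w^5 + ((-1)/16:K)*t^4*δ*z*w^4 + ((1)/8:K)*t^4*δ^2*w^4 + ((1)/4:K)*t^4*δ^4*w^3 + ((1)/8:K)*t^4*δ^4*z^2*w^2 + ((1)/8:K)*t^4*δ^5*z*w^2 + ((1)/16:K)*t^4*δ^5*z^3*w + ((-1)/4:K)*t^4*δ^6*w^2 + ((-1)/8:K)*t^4*δ^6*z^2*w + ((-1)/8:K)*t^4*δ^8*w + ((-1)/16:K)*t^4*δ^9*z + ((1)/8:K)*t^4*δ^10) * hA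
end
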